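/- arXiv:1503.04642 — 3 statements merged into one kernel-verified Lean document; each statement's English description precedes it below -/
import Mathlib

section
/- Let 𝔒 be a commutative ring, ℓ a prime, n ≥ 1 an integer, G a cyclic group of order ℓⁿ with generator γ, H the unique subgroup of G of order ℓ, and π : 𝔒[G] → 𝔒[G/H] the 𝔒-algebra homomorphism of group rings induced by the quotient map G → G/H. Let M be any 𝔒-module, and let G act on 𝔒[G] ⊗_𝔒 M through left multiplication on the group-ring factor (g·(h ⊗ m) = gh ⊗ m). Then the map a ↦ (∑_{g∈G} g) ⊗ a is an isomorphism from the ℓ-torsion submodule M[ℓ] = {a ∈ M : ℓa = 0} onto the set of elements of ker(π ⊗ id_M : 𝔒[G] ⊗_𝔒 M → 𝔒[G/H] ⊗_𝔒 M) that are fixed by γ. -/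
open TensorProduct

/-- Equation (7.2) of the paper: for `G` cyclic of order `ℓⁿ` with generator `γ`, `H` the
subgroup of order `ℓ`, `π : 𝔒[G] → 𝔒[G/H]` the induced map of group rings, and `M` any
`𝔒`-module, the map `a ↦ (∑_{g ∈ G} g) ⊗ a` is a bijection from the `ℓ`-torsion of `M` onto
the set of elements of `ker(π ⊗ id_M)` fixed by left multiplication by `γ` on the group-ring
factor. -/
theorem torsion_bijOn_ker_fixed
    (𝔒 : Type*) [CommRing 𝔒] (ℓ : ℕ) (hℓ : ℓ.Prime) (n : ℕ) (hn : 1 ≤ n)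
    (G : Type*) [CommGroup G] [Fintype G] (hG : Nat.card G = ℓ ^ n)
    (γ : G) (hγ : ∀ g : G, g ∈ Subgroup.zpowers γ)
    (H : Subgroup G) (hH : Nat.card H = ℓ)
    (M : Type*) [AddCommGroup M] [Module 𝔒 M] :
    Set.BijOn
      (fun a : M => (∑ g : G, MonoidAlgebra.of 𝔒 G g) ⊗ₜ[𝔒] a)
      {a : M | ℓ • a = 0}
      {z : MonoidAlgebra 𝔒 G ⊗[𝔒] M |
        z ∈ LinearMap.ker (LinearMap.rTensor M
          (MonoidAlgebra.mapDomainAlgHom 𝔒 𝔒 (QuotientGroup.mk' H)).toLinearMap) ∧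
        LinearMap.rTensor M
          (LinearMap.mulLeft 𝔒 (MonoidAlgebra.of 𝔒 G γ)) z = z} := by
  classical
  set π := (MonoidAlgebra.mapDomainAlgHom 𝔒 𝔒 (QuotientGroup.mk' H)).toLinearMap with hπdef
  let φ : MonoidAlgebra 𝔒 G ⊗[𝔒] M ≃ₗ[𝔒] (G →₀ M) :=
    (LinearEquiv.rTensor M (MonoidAlgebra.coeffLinearEquiv 𝔒)).trans
      (TensorProduct.finsuppScalarLeft 𝔒 M G)
  let ψ : MonoidAlgebra 𝔒 (G ⧸ H) ⊗[𝔒] M ≃ₗ[𝔒] ((G ⧸ H) →₀ M) :=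
    (LinearEquiv.rTensor M (MonoidAlgebra.coeffLinearEquiv 𝔒)).trans
      (TensorProduct.finsuppScalarLeft 𝔒 M (G ⧸ H))
  -- finsuppScalarLeft on a single
  have hsingG : ∀ (i : G) (r : 𝔒) (m : M),
      TensorProduct.finsuppScalarLeft 𝔒 M G ((Finsupp.single i r) ⊗ₜ[𝔒] m)
        = Finsupp.single i (r • m) := by
    intro i r m
    ext j
    rw [TensorProduct.finsuppScalarLeft_apply_tmul_apply]
    simp only [Finsupp.single_apply]
    split <;> simp
  have hsingQ : ∀ (i : G ⧸ H) (r : 𝔒) (m : M),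
      TensorProduct.finsuppScalarLeft 𝔒 M (G ⧸ H) ((Finsupp.single i r) ⊗ₜ[𝔒] m)
        = Finsupp.single i (r • m) := by
    intro i r m
    ext j
    rw [TensorProduct.finsuppScalarLeft_apply_tmul_apply]
    simp only [Finsupp.single_apply]
    split <;> simp
  -- naturality for π
  have hπ : ∀ z, ψ (LinearMap.rTensor M π z)
      = Finsupp.lmapDomain M 𝔒 (QuotientGroup.mk' H) (φ z) := by
    intro z
    have key : ψ.toLinearMap ∘ₗ LinearMap.rTensor M π
        = (Finsupp.lmapDomain M 𝔒 (QuotientGroup.mk' H)) ∘ₗ φ.toLinearMap := by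
      apply TensorProduct.ext'
      intro p m
      induction p using MonoidAlgebra.induction_linear with
      | zero => simp
      | add f g hf hg =>
          simp only [LinearMap.comp_apply, LinearMap.rTensor_tmul] at hf hg ⊢
          rw [map_add, add_tmul, add_tmul, map_add, map_add, map_add, hf, hg]
      | single g r =>
          simp only [LinearMap.comp_apply, LinearMap.rTensor_tmul, hπdef]
          rw [show π (MonoidAlgebra.single g r) =
              MonoidAlgebra.single ((QuotientGroup.mk' H) g) r from by
            simp [hπdef, MonoidAlgebra.mapDomainAlgHom]]
          show TensorProduct.finsuppScalarLeft 𝔒 M (G ⧸ H)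
              ((Finsupp.single ((QuotientGroup.mk' H) g) r) ⊗ₜ[𝔒] m)
            = Finsupp.lmapDomain M 𝔒 _
              (TensorProduct.finsuppScalarLeft 𝔒 M G ((Finsupp.single g r) ⊗ₜ[𝔒] m))
          rw [hsingQ, hsingG, Finsupp.lmapDomain_apply, Finsupp.mapDomain_single]
    exact LinearMap.congr_fun key z
  -- naturality for mulLeft γ
  have hμ : ∀ z, φ (LinearMap.rTensor M (LinearMap.mulLeft 𝔒 (MonoidAlgebra.of 𝔒 G γ)) z)
      = Finsupp.lmapDomain M 𝔒 (fun g => γ * g) (φ z) := by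
    intro z
    have key : φ.toLinearMap ∘ₗ LinearMap.rTensor M (LinearMap.mulLeft 𝔒 (MonoidAlgebra.of 𝔒 G γ))
        = (Finsupp.lmapDomain M 𝔒 (fun g => γ * g)) ∘ₗ φ.toLinearMap := by
      apply TensorProduct.ext'
      intro p m
      induction p using MonoidAlgebra.induction_linear with
      | zero => simp
      | add f g hf hg =>
          simp only [LinearMap.comp_apply, LinearMap.rTensor_tmul] at hf hg ⊢
          rw [map_add, add_tmul, add_tmul, map_add, map_add, map_add, hf, hg]
      | single g r =>
          simp only [LinearMap.comp_apply, LinearMap.rTensor_tmul]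
          rw [show (LinearMap.mulLeft 𝔒 (MonoidAlgebra.of 𝔒 G γ)) (MonoidAlgebra.single g r)
              = MonoidAlgebra.single (γ * g) r from by
            simp only [LinearMap.mulLeft_apply]
            show (MonoidAlgebra.single γ (1:𝔒)) * (MonoidAlgebra.single g r) = _
            rw [MonoidAlgebra.single_mul_single, one_mul]]
          show TensorProduct.finsuppScalarLeft 𝔒 M G ((Finsupp.single (γ * g) r) ⊗ₜ[𝔒] m)
            = Finsupp.lmapDomain M 𝔒 _
              (TensorProduct.finsuppScalarLeft 𝔒 M G ((Finsupp.single g r) ⊗ₜ[𝔒] m))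
          rw [hsingG, hsingG, Finsupp.lmapDomain_apply, Finsupp.mapDomain_single]
    exact LinearMap.congr_fun key z
  -- the image of the candidate map
  have hsum : ∀ a : M, φ ((∑ g : G, MonoidAlgebra.of 𝔒 G g) ⊗ₜ[𝔒] a)
      = ∑ g : G, Finsupp.single g a := by
    intro a
    rw [sum_tmul, map_sum]
    refine Finset.sum_congr rfl fun g _ => ?_
    show TensorProduct.finsuppScalarLeft 𝔒 M G ((Finsupp.single g (1:𝔒)) ⊗ₜ[𝔒] a) = _
    rw [hsingG, one_smul]
  -- value of the constant finsupp
  have hconstval : ∀ (a : M) (g : G), (∑ g' : G, Finsupp.single g' a) g = a := by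
    intro a g
    rw [Finset.sum_apply']
    simp only [Finsupp.single_apply]
    simp
  -- fiber cardinality
  have hfiber : ∀ q : G ⧸ H,
      (Finset.univ.filter (fun g : G => (QuotientGroup.mk g : G ⧸ H) = q)).card = ℓ := by
    intro q
    induction q using QuotientGroup.induction_on with
    | H x =>
      have e : {g : G // (QuotientGroup.mk g : G ⧸ H) = QuotientGroup.mk x} ≃ H :=
        { toFun := fun g => ⟨x⁻¹ * g.1, by
            have h1 := QuotientGroup.eq.mp g.2
            simpa [mul_inv_rev] using H.inv_mem h1⟩
          invFun := fun h => ⟨x * h.1, by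
            symm
            rw [QuotientGroup.eq]
            simpa using h.2⟩
          left_inv := fun g => by ext; simp
          right_inv := fun h => by ext; simp }
      rw [← hH, Nat.card_eq_fintype_card, ← Fintype.card_congr e, Fintype.card_subtype]
  -- value of mapDomain of the constant finsupp
  have hmapconst : ∀ (a : M) (q : G ⧸ H),
      (Finsupp.mapDomain (QuotientGroup.mk : G → G ⧸ H) (∑ g : G, Finsupp.single g a)) q
        = ℓ • a := by
    intro a q
    rw [show Finsupp.mapDomain (QuotientGroup.mk : G → G ⧸ H) (∑ g : G, Finsupp.single g a)
        = ∑ g : G, Finsupp.single (QuotientGroup.mk g : G ⧸ H) a from by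
      rw [show Finsupp.mapDomain (QuotientGroup.mk : G → G ⧸ H)
            (∑ g : G, Finsupp.single g a)
          = Finsupp.lmapDomain M 𝔒 (QuotientGroup.mk : G → G ⧸ H)
            (∑ g : G, Finsupp.single g a) from rfl, map_sum]
      simp [Finsupp.lmapDomain_apply, Finsupp.mapDomain_single]]
    rw [Finset.sum_apply']
    simp only [Finsupp.single_apply]
    rw [← Finset.sum_filter, Finset.sum_const, hfiber]
  refine ⟨?_, ?_, ?_⟩
  · -- MapsTo
    intro a ha
    have ha' : ℓ • a = 0 := ha
    constructor
    · rw [LinearMap.mem_ker]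
      apply ψ.injective
      rw [map_zero, hπ, hsum]
      ext q
      rw [Finsupp.lmapDomain_apply]
      rw [show ⇑(QuotientGroup.mk' H) = (QuotientGroup.mk : G → G ⧸ H) from rfl,
        hmapconst a q, ha']
      simp
    · apply φ.injective
      rw [hμ, hsum, map_sum]
      simp only [Finsupp.lmapDomain_apply, Finsupp.mapDomain_single]
      exact Fintype.sum_equiv (Equiv.mulLeft γ) _ _ (fun g => rfl)
  · -- InjOn
    intro a _ b _ h
    have h2 := congrArg φ h
    rw [hsum, hsum] at h2
    have h3 := DFunLike.congr_fun h2 (1 : G)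
    rwa [hconstval, hconstval] at h3
  · -- SurjOn
    intro z hz
    obtain ⟨hz1, hz2⟩ := hz
    set f := φ z with hfdef
    set a := f 1 with hadef
    have hshift : ∀ g : G, f (γ * g) = f g := by
      intro g
      have h2 := hμ z
      rw [hz2, Finsupp.lmapDomain_apply, ← hfdef] at h2
      conv_lhs => rw [h2]
      exact Finsupp.mapDomain_apply (mul_right_injective γ) f g
    have hpow : ∀ k : ℕ, f (γ ^ k) = f 1 := by
      intro k
      induction k with
      | zero => simp
      | succ k ih => rw [pow_succ', hshift, ih]
    have hconstf : ∀ g : G, f g = a := by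
      intro g
      obtain ⟨k, hk⟩ := (isOfFinOrder_of_finite γ).mem_powers_iff_mem_zpowers.mpr (hγ g)
      rw [← hk]
      exact hpow k
    have hfa : f = ∑ g : G, Finsupp.single g a := by
      ext g
      rw [hconstval]
      exact hconstf g
    have h0 : Finsupp.mapDomain (QuotientGroup.mk : G → G ⧸ H) f = 0 := by
      have h2 := hπ z
      rw [LinearMap.mem_ker.mp hz1, map_zero, Finsupp.lmapDomain_apply] at h2
      exact h2.symm
    have hℓa : ℓ • a = 0 := by
      have h3 := hmapconst a (1 : G ⧸ H)
      rw [← hfa, h0] at h3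
      simpa using h3.symm
    refine ⟨a, hℓa, ?_⟩
    apply φ.injective
    rw [hsum, ← hfa]
end

section
/- Let X be a finitely generated free abelian group and k a positive integer. Let S be a linearly independent subset of X of cardinality r such that there exists a basis (e_i) of X with respect to which every element of S is a ℤ-linear combination of the e_i with all coefficients in the interval [−k, k]. Let Y be the subgroup of X generated by S, and let Z be a subgroup of X with Y ⊆ Z and Z/Y finite. Then the index [Z : Y] is at most r! · k^r. -/
open Matrix in
private lemma rows_li {m : ℕ} (W : Matrix (Fin m) (Fin m) ℤ) (hW : W.det ≠ 0) :
    LinearIndependent ℤ (fun i => W i) := by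
  show LinearIndependent ℤ W.row
  rw [← Matrix.vecMul_injective_iff]
  intro g g' h
  simp only at h
  have h2 : (g ᵥ* W) ᵥ* W.adjugate = (g' ᵥ* W) ᵥ* W.adjugate := by rw [h]
  rw [Matrix.vecMul_vecMul, Matrix.vecMul_vecMul, Matrix.mul_adjugate] at h2
  funext j
  have h3 := congrFun h2 j
  simp [Matrix.vecMul, dotProduct, Matrix.one_apply, Matrix.smul_apply, mul_ite,
    Finset.sum_ite_eq'] at h3
  rcases h3 with h3 | h3
  · exact h3
  · exact absurd h3 hW

private lemma span_singleton_index (a : ℤ) :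
    (Ideal.span {a}).toAddSubgroup.index = a.natAbs := by
  have h : (Ideal.span {a}).toAddSubgroup = AddSubgroup.zmultiples a := by
    ext x
    simp only [Submodule.mem_toAddSubgroup, Ideal.mem_span_singleton,
      AddSubgroup.mem_zmultiples_iff]
    constructor
    · rintro ⟨c, rfl⟩; exact ⟨c, by push_cast [zsmul_eq_mul]; ring⟩
    · rintro ⟨k, rfl⟩; exact ⟨k, by push_cast [zsmul_eq_mul]; ring⟩
  rw [h, Int.index_zmultiples]

open Matrix in
private lemma card_quot_span_rows {r : ℕ} (W : Matrix (Fin r) (Fin r) ℤ) (hW : W.det ≠ 0) :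
    Nat.card ((Fin r → ℤ) ⧸ Submodule.span ℤ (Set.range (fun i => W i))) = W.det.natAbs := by
  classical
  have hind : LinearIndependent ℤ (fun i => W i) := rows_li W hW
  set P : Submodule ℤ (Fin r → ℤ) := Submodule.span ℤ (Set.range (fun i => W i)) with hP
  let rowsBasis : Module.Basis (Fin r) ℤ P := Module.Basis.span hind
  obtain ⟨n, snf⟩ := Submodule.smithNormalForm (Pi.basisFun ℤ (Fin r)) P
  have hnr : n = r := by
    have h1 := Module.finrank_eq_card_basis snf.bN
    have h2 := Module.finrank_eq_card_basis rowsBasis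
    simp only [Fintype.card_fin] at h1 h2
    omega
  have hnr' : r = n := hnr.symm
  subst hnr'
  obtain ⟨bM, bN, f, a, ha⟩ := snf
  -- index computation
  have hidx : Nat.card ((Fin r → ℤ) ⧸ P) = ∏ i : Fin r, (a i).natAbs := by
    have := Module.Basis.SmithNormalForm.toAddSubgroup_index_eq_pow_mul_prod ⟨bM, bN, f, a, ha⟩
    simp only [Fintype.card_fin, Nat.sub_self, pow_zero, one_mul] at this
    calc Nat.card ((Fin r → ℤ) ⧸ P) = P.toAddSubgroup.index := rfl
      _ = ∏ i : Fin r, (Ideal.span {a i}).toAddSubgroup.index := this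
      _ = ∏ i : Fin r, (a i).natAbs := by
          exact Finset.prod_congr rfl fun i _ => span_singleton_index (a i)
  rw [hidx]
  -- determinant computation
  have hσ : Function.Bijective f := Finite.injective_iff_bijective.mp f.injective
  let σ : Equiv.Perm (Fin r) := Equiv.ofBijective f hσ
  let std := Pi.basisFun ℤ (Fin r)
  have hdet1 : std.det (P.subtype ∘ rowsBasis) = W.det := by
    rw [Module.Basis.det_apply]
    rw [show std.toMatrix (P.subtype ∘ rowsBasis) = Wᵀ by
      ext i j
      rw [Module.Basis.toMatrix_apply]
      simp only [Function.comp_apply, Submodule.coe_subtype, Pi.basisFun_repr,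
        Matrix.transpose_apply, std, rowsBasis]
      exact congrFun (congrArg Subtype.val (Module.Basis.span_apply hind j)) i]
    exact Matrix.det_transpose W
  have hdet2 : std.det (P.subtype ∘ bN) = (∏ i, a i) • (Equiv.Perm.sign σ • std.det (bM : Fin r → (Fin r → ℤ))) := by
    have hc : (P.subtype ∘ bN) = fun i => a i • ((bM ∘ σ) i) := by
      funext i
      simp only [Function.comp_apply, Submodule.coe_subtype]
      rw [ha i]
      rfl
    rw [hc]
    calc (std.det fun i => a i • (⇑bM ∘ ⇑σ) i)
        = (∏ i, a i) • std.det (⇑bM ∘ ⇑σ) :=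
          std.det.toMultilinearMap.map_smul_univ a (⇑bM ∘ ⇑σ)
      _ = (∏ i, a i) • (Equiv.Perm.sign σ • std.det (bM : Fin r → (Fin r → ℤ))) := by
          rw [std.det.map_perm (bM : Fin r → (Fin r → ℤ)) σ]
  -- change of basis: natAbs equality
  have hassoc : (std.det (P.subtype ∘ rowsBasis)).natAbs = (std.det (P.subtype ∘ bN)).natAbs := by
    rw [Module.Basis.det_comp_basis, Module.Basis.det_comp_basis]
    exact Int.natAbs_eq_iff_associated.mpr
      (LinearMap.associated_det_comp_equiv _ _ _)
  have hu : IsUnit (std.det (bM : Fin r → (Fin r → ℤ))) := std.isUnit_det bM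
  rw [Int.isUnit_iff] at hu
  have : W.det.natAbs = ((∏ i, a i) • (Equiv.Perm.sign σ • std.det (bM : Fin r → (Fin r → ℤ)))).natAbs := by
    rw [← hdet2, ← hassoc, hdet1]
  rw [this]
  have hprod : (∏ i, a i).natAbs = ∏ i : Fin r, (a i).natAbs :=
    map_prod Int.natAbsHom a Finset.univ
  rcases Int.units_eq_one_or (Equiv.Perm.sign σ) with hs | hs <;>
    rcases hu with hu | hu <;>
      simp [hs, hu, smul_eq_mul, Int.natAbs_neg, hprod]


open Matrix in
private lemma exists_good_cols {r : ℕ} {ι : Type} [Fintype ι]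
    (A : Matrix (Fin r) ι ℚ) (hA : LinearIndependent ℚ (fun i => A i)) :
    ∃ T : Fin r → ι, (Matrix.of fun i j => A i (T j)).det ≠ 0 := by
  classical
  have hrankT : Aᵀ.rank = r := by
    rw [Matrix.rank_eq_finrank_span_cols]
    change Module.finrank ℚ (Submodule.span ℚ (Set.range (fun i => A i))) = r
    rw [finrank_span_eq_card hA, Fintype.card_fin]
  have hrank : A.rank = r := by rw [← Matrix.rank_transpose]; exact hrankT
  have hspan : Submodule.span ℚ (Set.range Aᵀ) = ⊤ := by
    apply Submodule.eq_top_of_finrank_eq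
    change Module.finrank ℚ (Submodule.span ℚ (Set.range A.col)) = _
    rw [← Matrix.rank_eq_finrank_span_cols, hrank, Module.finrank_pi, Fintype.card_fin]
  obtain ⟨t, hts, htsp, hti⟩ := exists_linearIndependent ℚ (Set.range Aᵀ)
  rw [hspan] at htsp
  let bt : Module.Basis t ℚ (Fin r → ℚ) := Module.Basis.mk hti (by rw [Subtype.range_coe, htsp])
  haveI : Fintype t := FiniteDimensional.fintypeBasisIndex bt
  have hcard : Fintype.card t = r := by
    have := Module.finrank_eq_card_basis bt
    rw [Module.finrank_pi, Fintype.card_fin] at this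
    omega
  let e2 : Fin r ≃ t := (Fintype.equivFinOfCardEq hcard).symm
  have hmem : ∀ j : Fin r, ((e2 j : t) : Fin r → ℚ) ∈ Set.range Aᵀ := fun j => hts (e2 j).2
  choose T hT using fun j => hmem j
  refine ⟨T, ?_⟩
  have hcols : LinearIndependent ℚ (fun j => (Matrix.of fun i j => A i (T j))ᵀ j) := by
    have : (fun j => (Matrix.of fun i j => A i (T j))ᵀ j) = fun j => ((e2 j : t) : Fin r → ℚ) := by
      funext j
      rw [← hT j]
      rfl
    rw [this]
    exact hti.comp e2 e2.injective
  have := (Matrix.linearIndependent_cols_iff_isUnit (A := Matrix.of fun i j => A i (T j))).mp hcols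
  exact IsUnit.ne_zero ((Matrix.isUnit_iff_isUnit_det _).mp this)

/-- Lemma A.2 of the Appendix: if `S` is a `k`-bounded linearly independent subset of
cardinality `r` of a finitely generated free abelian group `X`, `Y` is the subgroup spanned
by `S`, and `Z` is a subgroup of `X` containing `Y` with `Z/Y` finite, then
`[Z : Y] ≤ r! · k^r`. -/
theorem index_bound_of_bounded_independent_set
    (X : Type*) [AddCommGroup X] [Module.Free ℤ X] [Module.Finite ℤ X]
    (k : ℕ) (hk : 1 ≤ k) (r : ℕ) (S : Set X) (hScard : Nat.card S = r)
    (hSind : LinearIndependent ℤ (fun s : S => (s : X)))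
    (hbdd : ∃ (ι : Type) (b : Module.Basis ι ℤ X),
      ∀ s ∈ S, ∀ i, b.repr s i ∈ Set.Icc (-(k : ℤ)) (k : ℤ))
    (Z : Submodule ℤ X) (hYZ : Submodule.span ℤ S ≤ Z)
    (hfin : Finite (Z ⧸ Submodule.comap Z.subtype (Submodule.span ℤ S))) :
    Nat.card (Z ⧸ Submodule.comap Z.subtype (Submodule.span ℤ S)) ≤
      r.factorial * k ^ r := by
  classical
  obtain ⟨ι, b, hb⟩ := hbdd
  -- the basis index type is finite
  have hbfin : (Set.range (b : ι → X)).Finite :=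
    LinearIndependent.set_finite_of_isNoetherian
      ((linearIndepOn_id_range_iff b.injective).mpr b.linearIndependent)
  haveI : Finite ι := by
    haveI := hbfin.to_subtype
    exact Finite.of_injective (fun i => (⟨b i, Set.mem_range_self i⟩ : Set.range (b : ι → X)))
      (fun i j h => b.injective (congrArg Subtype.val h))
  haveI : Fintype ι := Fintype.ofFinite ι
  set Y : Submodule ℤ X := Submodule.span ℤ S with hY
  -- S is finite of cardinality r
  have hSfin : S.Finite := hSind.set_finite_of_isNoetherian
  haveI : Fintype S := hSfin.fintype
  have hcardS : Fintype.card S = r := by rw [← Nat.card_eq_fintype_card, hScard]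
  let e : Fin r ≃ S := (Fintype.equivFinOfCardEq hcardS).symm
  let u : Fin r → X := fun i => ((e i : S) : X)
  have huS : ∀ i, u i ∈ S := fun i => (e i).2
  have hrange : Set.range u = S := by
    have : Set.range u = Subtype.val '' Set.range e := by
      rw [← Set.range_comp]; rfl
    rw [this, Equiv.range_eq_univ, Set.image_univ, Subtype.range_coe]
  have hu_ind : LinearIndependent ℤ u := hSind.comp e e.injective
  -- pass to ℚ coefficients
  let ψ : (ι →₀ ℤ) →ₗ[ℤ] (ι → ℚ) :=
    { toFun := fun x i => (x i : ℚ)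
      map_add' := fun x y => by funext i; simp
      map_smul' := fun c x => by funext i; simp }
  have hψinj : Function.Injective ψ := by
    intro x y hxy
    ext i
    have h := congrFun hxy i
    have h' : ((x i : ℚ)) = ((y i : ℚ)) := h
    exact_mod_cast h'
  have h1 : LinearIndependent ℤ (fun i => b.repr (u i)) :=
    hu_ind.map' b.repr.toLinearMap b.repr.ker
  have h2 : LinearIndependent ℤ (fun i => ψ (b.repr (u i))) :=
    h1.map' ψ (LinearMap.ker_eq_bot.mpr hψinj)
  have h3 : LinearIndependent ℚ (fun i => ψ (b.repr (u i))) :=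
    (LinearIndependent.iff_fractionRing ℤ ℚ).mp h2
  -- choose good columns
  obtain ⟨T, hdetq⟩ := exists_good_cols (Matrix.of fun i x => ψ (b.repr (u i)) x) h3
  -- the integer minor matrix
  set W : Matrix (Fin r) (Fin r) ℤ := Matrix.of fun i j => b.repr (u i) (T j) with hW
  have hWq : W.map (Int.cast : ℤ → ℚ) =
      Matrix.of fun i j => (Matrix.of fun i x => ψ (b.repr (u i)) x) i (T j) := by
    ext i j; rfl
  have hWdet : W.det ≠ 0 := by
    intro h0
    apply hdetq
    rw [← hWq]
    have : (W.map (Int.cast : ℤ → ℚ)).det = ((W.det : ℤ) : ℚ) :=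
      (RingHom.map_det (Int.castRingHom ℚ) W).symm
    rw [this, h0, Int.cast_zero]
  -- the projection map
  let f : X →ₗ[ℤ] (Fin r → ℤ) :=
    LinearMap.pi fun j => (Finsupp.lapply (T j)) ∘ₗ (b.repr : X →ₗ[ℤ] (ι →₀ ℤ))
  have hfu : ∀ i, f (u i) = W i := fun i => by funext j; rfl
  have hWli : LinearIndependent ℤ (fun i => W i) := rows_li W hWdet
  set P : Submodule ℤ (Fin r → ℤ) := Submodule.span ℤ (Set.range (fun i => W i)) with hP
  have hcardP : Nat.card ((Fin r → ℤ) ⧸ P) = W.det.natAbs := card_quot_span_rows W hWdet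
  haveI hPfin : Finite ((Fin r → ℤ) ⧸ P) := by
    apply Nat.finite_of_card_ne_zero
    rw [hcardP]
    exact Int.natAbs_ne_zero.mpr hWdet
  -- f maps Y into P
  have hmapY : Submodule.map f Y = P := by
    rw [hY, Submodule.map_span, ← hrange, ← Set.range_comp,
      show (⇑f ∘ u) = fun i => W i from funext hfu]
  have hfY : ∀ y ∈ Y, f y ∈ P := fun y hy => hmapY ▸ Submodule.mem_map_of_mem hy
  -- the induced map on quotients
  let g0 : Z →ₗ[ℤ] ((Fin r → ℤ) ⧸ P) := P.mkQ ∘ₗ f ∘ₗ Z.subtype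
  have hker : Submodule.comap Z.subtype Y ≤ LinearMap.ker g0 := by
    intro z hz
    simp only [LinearMap.mem_ker, g0, LinearMap.comp_apply, Submodule.mkQ_apply,
      Submodule.Quotient.mk_eq_zero]
    exact hfY _ hz
  let φ := Submodule.liftQ (Submodule.comap Z.subtype Y) g0 hker
  have hφinj : Function.Injective φ := by
    rw [← LinearMap.ker_eq_bot, Submodule.eq_bot_iff]
    intro q hq
    obtain ⟨z, rfl⟩ := Submodule.Quotient.mk_surjective _ q
    rw [LinearMap.mem_ker, Submodule.liftQ_apply] at hq
    have hfz : f (z : X) ∈ P := by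
      simpa [g0, Submodule.Quotient.mk_eq_zero] using hq
    rw [hP, Submodule.mem_span_range_iff_exists_fun ℤ] at hfz
    obtain ⟨c, hc⟩ := hfz
    set y : X := ∑ i, c i • u i with hy
    have hyY : y ∈ Y := Submodule.sum_mem _ fun i _ =>
      Submodule.smul_mem _ _ (Submodule.subset_span (huS i))
    have hfy : f y = f (z : X) := by
      rw [hy, map_sum]
      simp_rw [map_smul, hfu]
      exact hc
    -- torsion argument
    set w : Z := ⟨(z : X) - y, sub_mem z.2 (hYZ hyY)⟩ with hw
    set q' : Z ⧸ Submodule.comap Z.subtype Y := Submodule.Quotient.mk w with hq'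
    have hord : addOrderOf q' • q' = 0 := addOrderOf_nsmul_eq_zero q'
    have hordpos : 0 < addOrderOf q' := by
      haveI := hfin
      exact (isOfFinAddOrder_of_finite q').addOrderOf_pos
    set m : ℕ := addOrderOf q' with hm
    have hmw : (((m : ℤ) • w : Z)) ∈ Submodule.comap Z.subtype Y := by
      rw [← Submodule.Quotient.mk_eq_zero, Submodule.Quotient.mk_smul, ← hq', natCast_zsmul]
      exact hord
    have hmwY : (m : ℤ) • ((z : X) - y) ∈ Y := by
      have hcoe : ((((m : ℤ) • w : Z)) : X) = (m : ℤ) • ((z : X) - y) := by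
        simp [hw]
      rwa [Submodule.mem_comap, Submodule.coe_subtype, hcoe] at hmw
    rw [hY, ← hrange, Submodule.mem_span_range_iff_exists_fun ℤ] at hmwY
    obtain ⟨d, hd⟩ := hmwY
    have hfd : ∑ i, d i • W i = 0 := by
      have := congrArg f hd
      rw [map_sum] at this
      simp_rw [map_smul, hfu] at this
      rw [this, map_sub, hfy, sub_self, smul_zero]
    have hd0 : ∀ i, d i = 0 := by
      have := linearIndependent_iff'.mp hWli Finset.univ d (by simpa using hfd)
      intro i; exact this i (Finset.mem_univ i)
    have hzy : (m : ℤ) • ((z : X) - y) = 0 := by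
      rw [← hd]
      exact Finset.sum_eq_zero fun i _ => by rw [hd0 i, zero_smul]
    have hsub : (z : X) - y = 0 := by
      rcases smul_eq_zero.mp hzy with h | h
      · exact absurd (by exact_mod_cast h) (by positivity : (0:ℤ) < m).ne'
      · exact h
    have : (z : X) ∈ Y := by
      have : (z : X) = y := sub_eq_zero.mp hsub
      rw [this]; exact hyY
    rwa [Submodule.Quotient.mk_eq_zero]
  -- conclude
  have hle : Nat.card (Z ⧸ Submodule.comap Z.subtype Y) ≤ Nat.card ((Fin r → ℤ) ⧸ P) :=
    Nat.card_le_card_of_injective φ hφinj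
  rw [hcardP] at hle
  refine hle.trans ?_
  -- determinant bound
  have habs : ∀ i j, (AbsoluteValue.abs : AbsoluteValue ℤ ℤ) (W i j) ≤ (k : ℤ) := by
    intro i j
    have := hb (u i) (huS i) (T j)
    rw [Set.mem_Icc] at this
    exact abs_le.mpr this
  have hdet := Matrix.det_le habs
  rw [Fintype.card_fin, nsmul_eq_mul] at hdet
  have h2 : (W.det.natAbs : ℤ) = |W.det| := (Int.abs_eq_natAbs _).symm
  have h3 : (W.det.natAbs : ℤ) ≤ (r.factorial : ℤ) * (k : ℤ) ^ r := by
    rw [h2]; exact hdet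
  exact_mod_cast h3
end

section
/- Let ℓ be a prime and let r ≥ 2 and k ≥ 1 be integers. Let T = ((ℤ/ℓℤ)ˣ)^r, the group of 𝔽_ℓ-points of a split torus of dimension r over 𝔽_ℓ. Let m₁, m₂ ∈ ℤ^r be vectors all of whose entries lie in [−k, k] and which generate a subgroup of ℤ^r of rank 2, and let χ₁, χ₂ : T → (ℤ/ℓℤ)ˣ be the corresponding characters χ_j(t₁, …, t_r) = ∏_{i=1}^r t_i^{m_{j,i}}. Then for all a₁, a₂ ∈ (ℤ/ℓℤ)ˣ, the number of t ∈ T with χ₁(t) = a₁ and χ₂(t) = a₂ is at most 2k²(ℓ − 1)^{r−2}. -/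
open Finset

/-- Decompose a `Nat.card` along the fibres of a map into a finite type. -/
lemma nat_card_eq_sum_fibers {X Y : Type*} [Finite X] [Fintype Y] (f : X → Y) :
    Nat.card X = ∑ y : Y, Nat.card {x // f x = y} := by
  classical
  cases nonempty_fintype X
  simp only [Nat.card_eq_fintype_card]
  rw [← Fintype.card_sigma]
  exact (Fintype.card_congr (Equiv.sigmaFiberEquiv f)).symm

/-- In a finite cyclic group, the number of solutions of `x ^ n = 1` (integer `n ≠ 0`)
is at most `n.natAbs`. -/
lemma card_zpow_eq_one_le {G : Type*} [Group G] [Fintype G] [IsCyclic G] {n : ℤ} (hn : n ≠ 0) :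
    Nat.card {x : G // x ^ n = 1} ≤ n.natAbs := by
  classical
  have hiff : ∀ x : G, x ^ n = 1 ↔ x ^ n.natAbs = 1 := by
    intro x
    constructor
    · intro hx
      have h1 : (orderOf x : ℤ) ∣ n := orderOf_dvd_iff_zpow_eq_one.mpr hx
      exact orderOf_dvd_iff_pow_eq_one.mp (Int.ofNat_dvd.mp (Int.dvd_natAbs.mpr h1))
    · intro hx
      have h1 : (orderOf x : ℤ) ∣ (n.natAbs : ℤ) :=
        Int.natCast_dvd_natCast.mpr (orderOf_dvd_iff_pow_eq_one.mpr hx)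
      exact orderOf_dvd_iff_zpow_eq_one.mp (h1.trans (Int.natAbs_dvd.mpr dvd_rfl))
  rw [Nat.card_eq_fintype_card, Fintype.card_subtype]
  have hfe : (univ.filter fun x : G => x ^ n = 1) = univ.filter fun x : G => x ^ n.natAbs = 1 :=
    Finset.filter_congr fun x _ => by rw [hiff x]
  rw [hfe]
  simpa using IsCyclic.card_pow_eq_one_le (α := G) (Int.natAbs_pos.mpr hn)

/-- The number of simultaneous solutions of `x^a y^b = 1`, `x^c y^d = 1` in a finite
cyclic group is at most `|ad - bc|` when `ad - bc ≠ 0`. -/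
lemma card_two_rel_le {G : Type*} [CommGroup G] [Fintype G] [IsCyclic G]
    (a b c d : ℤ) (hΔ : a * d - b * c ≠ 0) :
    Nat.card {p : G × G // p.1 ^ a * p.2 ^ b = 1 ∧ p.1 ^ c * p.2 ^ d = 1}
      ≤ (a * d - b * c).natAbs := by
  classical
  set g : ℤ := (Int.gcd b d : ℤ) with hgdef
  have hg0 : g ≠ 0 := by
    simp only [hgdef, ne_eq, Int.natCast_eq_zero, Int.gcd_eq_zero_iff, not_and]
    intro hb hd
    apply hΔ
    rw [hb, hd]; ring
  obtain ⟨b', hb⟩ : g ∣ b := Int.gcd_dvd_left b d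
  obtain ⟨d', hd⟩ : g ∣ d := Int.gcd_dvd_right b d
  set e : ℤ := a * d' - c * b' with hedef
  have hge : g * e = a * d - b * c := by rw [hedef, hb, hd]; ring
  have he0 : e ≠ 0 := by
    intro h
    apply hΔ
    rw [← hge, h, mul_zero]
  have hbd : b * d' = d * b' := by rw [hb, hd]; ring
  set X := {p : G × G // p.1 ^ a * p.2 ^ b = 1 ∧ p.1 ^ c * p.2 ^ d = 1} with hXdef
  rw [nat_card_eq_sum_fibers (fun p : X => p.1.1)]
  have key : ∀ x : G, Nat.card {p : X // p.1.1 = x} ≤ if x ^ e = 1 then Int.gcd b d else 0 := by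
    intro x
    -- if the fibre is nonempty then x ^ e = 1
    have hxe : Nonempty {p : X // p.1.1 = x} → x ^ e = 1 := by
      rintro ⟨⟨⟨⟨x₁, y⟩, h1, h2⟩, hfst⟩⟩
      have hx : x₁ = x := hfst
      rw [← hx]
      simp only at h1 h2
      have e1 : x₁ ^ (a * d') * y ^ (b * d') = 1 := by
        have := congrArg (· ^ d') h1
        simpa [mul_zpow, ← zpow_mul] using this
      have e2 : x₁ ^ (c * b') * y ^ (d * b') = 1 := by
        have := congrArg (· ^ b') h2
        simpa [mul_zpow, ← zpow_mul] using this
      calc x₁ ^ e = (x₁ ^ (a * d') * (x₁ ^ (c * b'))⁻¹) * (y ^ (b * d') * (y ^ (d * b'))⁻¹) := by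
            rw [hbd, mul_inv_cancel, mul_one, hedef, zpow_sub]
        _ = (x₁ ^ (a * d') * y ^ (b * d')) * (x₁ ^ (c * b') * y ^ (d * b'))⁻¹ := by
            rw [mul_inv, mul_mul_mul_comm]
        _ = 1 := by rw [e1, e2, inv_one, mul_one]
    by_cases hne : Nonempty {p : X // p.1.1 = x}
    · rw [if_pos (hxe hne)]
      obtain ⟨⟨⟨⟨x₁, y₀⟩, hp1, hp2⟩, hfst⟩⟩ := hne
      have hx₁ : x₁ = x := hfst
      simp only at hp1 hp2
      rw [hx₁] at hp1 hp2
      -- inject the fibre into the solutions of z ^ g = 1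
      have hyrel : ∀ q : {p : X // p.1.1 = x}, (q.1.1.2 * y₀⁻¹) ^ b = 1 ∧ (q.1.1.2 * y₀⁻¹) ^ d = 1 := by
        rintro ⟨⟨⟨x₂, y⟩, hq1, hq2⟩, hq⟩
        have hx₂ : x₂ = x := hq
        simp only at hq1 hq2 ⊢
        rw [hx₂] at hq1 hq2
        constructor
        · rw [mul_zpow, inv_zpow]
          calc y ^ b * (y₀ ^ b)⁻¹ = (x ^ a * y ^ b) * (x ^ a * y₀ ^ b)⁻¹ := by
                rw [mul_inv, mul_mul_mul_comm, mul_inv_cancel, one_mul]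
            _ = 1 := by rw [hq1, hp1, mul_inv_cancel]
        · rw [mul_zpow, inv_zpow]
          calc y ^ d * (y₀ ^ d)⁻¹ = (x ^ c * y ^ d) * (x ^ c * y₀ ^ d)⁻¹ := by
                rw [mul_inv, mul_mul_mul_comm, mul_inv_cancel, one_mul]
            _ = 1 := by rw [hq2, hp2, mul_inv_cancel]
      have hinj : ∀ q : {p : X // p.1.1 = x}, (q.1.1.2 * y₀⁻¹) ^ g = 1 := by
        intro q
        obtain ⟨hyb, hyd⟩ := hyrel q
        have hbez := Int.gcd_eq_gcd_ab b d
        rw [hgdef, hbez, zpow_add, zpow_mul, zpow_mul, hyb, hyd, one_zpow, one_zpow, one_mul]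
      have hle : Nat.card {p : X // p.1.1 = x} ≤ Nat.card {z : G // z ^ g = 1} := by
        apply Nat.card_le_card_of_injective
          (f := fun q : {p : X // p.1.1 = x} => (⟨q.1.1.2 * y₀⁻¹, hinj q⟩ : {z : G // z ^ g = 1}))
        rintro ⟨⟨⟨x₂, y⟩, hq1, hq2⟩, hq⟩ ⟨⟨⟨x₃, y'⟩, hq1', hq2'⟩, hq'⟩ hval
        have hval' : y * y₀⁻¹ = y' * y₀⁻¹ := congrArg Subtype.val hval
        have hy : y = y' := mul_right_cancel hval'
        have hxx : x₂ = x₃ := (show x₂ = x from hq).trans (show x₃ = x from hq').symm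
        have hpq : (x₂, y) = (x₃, y') := by rw [hxx, hy]
        exact Subtype.ext (Subtype.ext hpq)
      refine hle.trans ?_
      have := card_zpow_eq_one_le (G := G) hg0
      simpa [hgdef] using this
    · rw [not_nonempty_iff] at hne
      haveI := hne
      rw [Nat.card_of_isEmpty]
      exact Nat.zero_le _
  calc (∑ x : G, Nat.card {p : X // p.1.1 = x})
      ≤ ∑ x : G, (if x ^ e = 1 then Int.gcd b d else 0) := Finset.sum_le_sum fun x _ => key x
    _ = ∑ x ∈ univ.filter (fun x : G => x ^ e = 1), Int.gcd b d := (Finset.sum_filter _ _).symm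
    _ = (univ.filter (fun x : G => x ^ e = 1)).card * Int.gcd b d := by
        rw [Finset.sum_const, smul_eq_mul]
    _ ≤ e.natAbs * Int.gcd b d := by
        apply Nat.mul_le_mul_right
        have := card_zpow_eq_one_le (G := G) he0
        rwa [Nat.card_eq_fintype_card, Fintype.card_subtype] at this
    _ = (a * d - b * c).natAbs := by
        rw [← hge, Int.natAbs_mul, hgdef, Int.natAbs_natCast, Nat.mul_comm]

/-- If one entry of `m₁` is nonzero and all the `2×2` minors of the pair `(m₁, m₂)` vanish,
then the span of `{m₁, m₂}` has rank at most `1`. -/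
lemma rank_span_pair_le_one {r : ℕ} (m₁ m₂ : Fin r → ℤ) (i : Fin r) (hi : m₁ i ≠ 0)
    (hmin : ∀ j, m₁ i * m₂ j = m₂ i * m₁ j) :
    Module.finrank ℤ (Submodule.span ℤ ({m₁, m₂} : Set (Fin r → ℤ))) ≤ 1 := by
  set N := Submodule.span ℤ ({m₁, m₂} : Set (Fin r → ℤ)) with hN
  have h0 : ∀ z : N, (z : Fin r → ℤ) i = 0 → z = 0 := by
    rintro ⟨z, hz⟩ hzi
    obtain ⟨aco, bco, habz⟩ := Submodule.mem_span_pair.mp hz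
    simp only at hzi
    have hzi' : aco * m₁ i + bco * m₂ i = 0 := by
      have h := congrFun habz i
      simp only [Pi.add_apply, Pi.smul_apply, smul_eq_mul] at h
      rw [h]; exact hzi
    have hz0 : ∀ jj, z jj = 0 := by
      intro jj
      have hzjj : z jj = aco * m₁ jj + bco * m₂ jj := by
        have h := congrFun habz jj
        simp only [Pi.add_apply, Pi.smul_apply, smul_eq_mul] at h
        rw [← h]
      have hmul : m₁ i * z jj = 0 := by
        rw [hzjj]
        linear_combination bco * (hmin jj) + m₁ jj * hzi'
      exact (mul_eq_zero.mp hmul).resolve_left hi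
    ext jj
    exact hz0 jj
  have hinj : Function.Injective
      ((LinearMap.proj i : (Fin r → ℤ) →ₗ[ℤ] ℤ).comp N.subtype) := by
    intro x y hxy
    have hsub : ((x - y : N) : Fin r → ℤ) i = 0 := by
      have : (x : Fin r → ℤ) i = (y : Fin r → ℤ) i := hxy
      simp [this]
    have := h0 (x - y) hsub
    exact sub_eq_zero.mp this
  have := LinearMap.finrank_le_finrank_of_injective hinj
  simpa using this

/-- A rank-2 pair of integer vectors has a nonvanishing `2×2` minor. -/
lemma exists_minor_ne_zero {r : ℕ} (m₁ m₂ : Fin r → ℤ)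
    (hrank : Module.finrank ℤ (Submodule.span ℤ ({m₁, m₂} : Set (Fin r → ℤ))) = 2) :
    ∃ i j, m₁ i * m₂ j - m₁ j * m₂ i ≠ 0 := by
  by_contra hcon
  push_neg at hcon
  have hmin : ∀ i j, m₁ i * m₂ j = m₁ j * m₂ i := by
    intro i j
    have := hcon i j
    linarith
  rcases ne_or_eq m₁ 0 with h1 | h1
  · obtain ⟨i, hi⟩ := Function.ne_iff.mp h1
    have := rank_span_pair_le_one m₁ m₂ i hi (fun j => by linarith [hmin i j])
    omega
  · rcases ne_or_eq m₂ 0 with h2 | h2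
    · obtain ⟨i, hi⟩ := Function.ne_iff.mp h2
      have hsw : ({m₁, m₂} : Set (Fin r → ℤ)) = {m₂, m₁} := Set.pair_comm m₁ m₂
      rw [hsw] at hrank
      have := rank_span_pair_le_one m₂ m₁ i hi (fun j => by linarith [hmin j i])
      omega
    · subst h1; subst h2
      rw [show ({(0 : Fin r → ℤ), 0} : Set (Fin r → ℤ)) = {0} by simp,
        Submodule.span_zero_singleton, finrank_bot] at hrank
      exact absurd hrank (by norm_num)

/-- Lemma A.3 of the Appendix: if `χ₁, χ₂` are `k`-bounded characters of the split torus
`((ℤ/ℓℤ)ˣ)^r` generating a rank-2 subgroup of the character lattice `ℤ^r`, then each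
simultaneous fibre of `(χ₁, χ₂)` has at most `2k²(ℓ-1)^{r-2}` elements. -/
theorem torus_character_fibre_bound (ℓ : ℕ) (hℓ : ℓ.Prime) (r k : ℕ) (hr : 2 ≤ r) (hk : 1 ≤ k)
    (m₁ m₂ : Fin r → ℤ)
    (hm₁ : ∀ i, m₁ i ∈ Set.Icc (-(k : ℤ)) (k : ℤ))
    (hm₂ : ∀ i, m₂ i ∈ Set.Icc (-(k : ℤ)) (k : ℤ))
    (hrank : Module.finrank ℤ (Submodule.span ℤ ({m₁, m₂} : Set (Fin r → ℤ))) = 2)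
    (a₁ a₂ : (ZMod ℓ)ˣ) :
    Nat.card {t : Fin r → (ZMod ℓ)ˣ //
        (∏ i, t i ^ m₁ i) = a₁ ∧ (∏ i, t i ^ m₂ i) = a₂} ≤
      2 * k ^ 2 * (ℓ - 1) ^ (r - 2) := by
  haveI : Fact ℓ.Prime := ⟨hℓ⟩
  classical
  obtain ⟨i, j, hΔ⟩ := exists_minor_ne_zero m₁ m₂ hrank
  have hij : i ≠ j := by rintro rfl; exact hΔ (by ring)
  -- the minor is bounded by 2k²
  have hΔle : (m₁ i * m₂ j - m₁ j * m₂ i).natAbs ≤ 2 * k ^ 2 := by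
    have h1 := hm₁ i; have h2 := hm₂ j; have h3 := hm₁ j; have h4 := hm₂ i
    simp only [Set.mem_Icc] at h1 h2 h3 h4
    have b1 : |m₁ i * m₂ j| ≤ (k : ℤ) * k := by
      rw [abs_mul]
      exact mul_le_mul (abs_le.mpr h1) (abs_le.mpr h2) (abs_nonneg _) (by positivity)
    have b2 : |m₁ j * m₂ i| ≤ (k : ℤ) * k := by
      rw [abs_mul]
      exact mul_le_mul (abs_le.mpr h3) (abs_le.mpr h4) (abs_nonneg _) (by positivity)
    have htri : |m₁ i * m₂ j - m₁ j * m₂ i| ≤ |m₁ i * m₂ j| + |m₁ j * m₂ i| := by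
      rw [sub_eq_add_neg]
      exact (abs_add_le _ _).trans_eq (by rw [abs_neg])
    have habs : |m₁ i * m₂ j - m₁ j * m₂ i| ≤ ((2 * k ^ 2 : ℕ) : ℤ) := by
      push_cast
      nlinarith
    rw [Int.abs_eq_natAbs] at habs
    exact_mod_cast habs
  -- cardinality of the two-variable solution set
  have hB : Nat.card {p : (ZMod ℓ)ˣ × (ZMod ℓ)ˣ //
        p.1 ^ m₁ i * p.2 ^ m₁ j = 1 ∧ p.1 ^ m₂ i * p.2 ^ m₂ j = 1} ≤ 2 * k ^ 2 :=
    (card_two_rel_le (m₁ i) (m₁ j) (m₂ i) (m₂ j) hΔ).trans hΔle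
  -- fibration over the coordinates other than i, j
  have hdecomp := nat_card_eq_sum_fibers
    (X := {t : Fin r → (ZMod ℓ)ˣ // (∏ z, t z ^ m₁ z) = a₁ ∧ (∏ z, t z ^ m₂ z) = a₂})
    (Y := ({x : Fin r // x ≠ i ∧ x ≠ j} → (ZMod ℓ)ˣ))
    (fun t x => t.1 x.1)
  rw [hdecomp]
  have hfib : ∀ o : ({x : Fin r // x ≠ i ∧ x ≠ j} → (ZMod ℓ)ˣ),
      Nat.card {t : {t : Fin r → (ZMod ℓ)ˣ //
          (∏ z, t z ^ m₁ z) = a₁ ∧ (∏ z, t z ^ m₂ z) = a₂} //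
        (fun t x => t.1 x.1) t = o} ≤
      Nat.card {p : (ZMod ℓ)ˣ × (ZMod ℓ)ˣ //
        p.1 ^ m₁ i * p.2 ^ m₁ j = 1 ∧ p.1 ^ m₂ i * p.2 ^ m₂ j = 1} := by
    intro o
    by_cases hne : Nonempty {t : {t : Fin r → (ZMod ℓ)ˣ //
        (∏ z, t z ^ m₁ z) = a₁ ∧ (∏ z, t z ^ m₂ z) = a₂} // (fun t x => t.1 x.1) t = o}
    · obtain ⟨⟨⟨t₀, ht₀⟩, hft₀⟩⟩ := hne
      have ht₀o : ∀ x : {x : Fin r // x ≠ i ∧ x ≠ j}, t₀ x.1 = o x := fun x => congrFun hft₀ x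
      have prodlem : ∀ (t : Fin r → (ZMod ℓ)ˣ),
          (∀ x : {x : Fin r // x ≠ i ∧ x ≠ j}, t x.1 = t₀ x.1) →
          ∀ (m : Fin r → ℤ) (aa : (ZMod ℓ)ˣ), (∏ z, t z ^ m z) = aa →
          (∏ z, t₀ z ^ m z) = aa →
          (t i * (t₀ i)⁻¹) ^ m i * (t j * (t₀ j)⁻¹) ^ m j = 1 := by
        intro t hto m aa hpa hpb
        have hall : ∏ z, (t z * (t₀ z)⁻¹) ^ m z = 1 := by
          have hsplit : ∏ z, (t z * (t₀ z)⁻¹) ^ m z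
              = (∏ z, t z ^ m z) * (∏ z, t₀ z ^ m z)⁻¹ := by
            rw [← Finset.prod_inv_distrib, ← Finset.prod_mul_distrib]
            exact Finset.prod_congr rfl fun z _ => by rw [mul_zpow, inv_zpow]
          rw [hsplit, hpa, hpb, mul_inv_cancel]
        have hsub : ∏ z ∈ ({i, j} : Finset (Fin r)), (t z * (t₀ z)⁻¹) ^ m z
            = ∏ z, (t z * (t₀ z)⁻¹) ^ m z := by
          apply Finset.prod_subset (Finset.subset_univ _)
          intro x _ hx
          simp only [Finset.mem_insert, Finset.mem_singleton, not_or] at hx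
          rw [hto ⟨x, hx.1, hx.2⟩, mul_inv_cancel, one_zpow]
        rw [Finset.prod_pair hij] at hsub
        rw [← hsub] at hall
        exact hall
      have hcoords : ∀ t : {t : {t : Fin r → (ZMod ℓ)ˣ //
            (∏ z, t z ^ m₁ z) = a₁ ∧ (∏ z, t z ^ m₂ z) = a₂} // (fun t x => t.1 x.1) t = o},
          ∀ x : {x : Fin r // x ≠ i ∧ x ≠ j}, t.1.1 x.1 = t₀ x.1 := by
        intro t x
        have hh : t.1.1 x.1 = o x := congrFun t.2 x
        rw [hh, ht₀o x]
      apply Nat.card_le_card_of_injective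
        (f := fun t => (⟨(t.1.1 i * (t₀ i)⁻¹, t.1.1 j * (t₀ j)⁻¹),
          prodlem t.1.1 (hcoords t) m₁ a₁ t.1.2.1 ht₀.1,
          prodlem t.1.1 (hcoords t) m₂ a₂ t.1.2.2 ht₀.2⟩ :
          {p : (ZMod ℓ)ˣ × (ZMod ℓ)ˣ //
            p.1 ^ m₁ i * p.2 ^ m₁ j = 1 ∧ p.1 ^ m₂ i * p.2 ^ m₂ j = 1}))
      intro t t' hval
      have hval' := congrArg Subtype.val hval
      have hvi : t.1.1 i = t'.1.1 i := mul_right_cancel (congrArg Prod.fst hval')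
      have hvj : t.1.1 j = t'.1.1 j := mul_right_cancel (congrArg Prod.snd hval')
      apply Subtype.ext; apply Subtype.ext
      funext z
      by_cases hz1 : z = i
      · rw [hz1]; exact hvi
      · by_cases hz2 : z = j
        · rw [hz2]; exact hvj
        · exact (hcoords t ⟨z, hz1, hz2⟩).trans (hcoords t' ⟨z, hz1, hz2⟩).symm
    · haveI := not_nonempty_iff.mp hne
      rw [Nat.card_of_isEmpty]
      exact Nat.zero_le _
  have hcardY : Fintype.card ({x : Fin r // x ≠ i ∧ x ≠ j} → (ZMod ℓ)ˣ)
      = (ℓ - 1) ^ (r - 2) := by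
    rw [Fintype.card_fun, ZMod.card_units ℓ]
    congr 1
    rw [Fintype.card_subtype]
    have hfe : (Finset.univ.filter fun x : Fin r => x ≠ i ∧ x ≠ j)
        = Finset.univ \ ({i, j} : Finset (Fin r)) := by
      ext x
      simp [not_or]
    rw [hfe, Finset.card_sdiff_of_subset (Finset.subset_univ _), Finset.card_univ, Fintype.card_fin,
      Finset.card_pair hij]
  calc (∑ o : ({x : Fin r // x ≠ i ∧ x ≠ j} → (ZMod ℓ)ˣ),
        Nat.card {t : {t : Fin r → (ZMod ℓ)ˣ //
          (∏ z, t z ^ m₁ z) = a₁ ∧ (∏ z, t z ^ m₂ z) = a₂} // (fun t x => t.1 x.1) t = o})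
      ≤ ∑ _o : ({x : Fin r // x ≠ i ∧ x ≠ j} → (ZMod ℓ)ˣ),
        Nat.card {p : (ZMod ℓ)ˣ × (ZMod ℓ)ˣ //
          p.1 ^ m₁ i * p.2 ^ m₁ j = 1 ∧ p.1 ^ m₂ i * p.2 ^ m₂ j = 1} :=
        Finset.sum_le_sum fun o _ => hfib o
    _ = Fintype.card ({x : Fin r // x ≠ i ∧ x ≠ j} → (ZMod ℓ)ˣ) *
        Nat.card {p : (ZMod ℓ)ˣ × (ZMod ℓ)ˣ //
          p.1 ^ m₁ i * p.2 ^ m₁ j = 1 ∧ p.1 ^ m₂ i * p.2 ^ m₂ j = 1} := by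
        rw [Finset.sum_const, Finset.card_univ, smul_eq_mul]
    _ ≤ Fintype.card ({x : Fin r // x ≠ i ∧ x ≠ j} → (ZMod ℓ)ˣ) * (2 * k ^ 2) :=
        Nat.mul_le_mul_left _ hB
    _ = 2 * k ^ 2 * (ℓ - 1) ^ (r - 2) := by rw [hcardY, Nat.mul_comm]
end
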